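/- For i = 1,2 let Σ_{(i)} be the (p+m)×(p+m) block matrix with diagonal blocks I_p, I_m and off-diagonal blocks λ U_{(i)} V_{(i)}' and λ V_{(i)} U_{(i)}', where λ ∈ (0,1), U_{(i)} ∈ O(p,r), V_{(i)} ∈ O(m,r). Let ℙ_{(i)} be the distribution of n i.i.d. samples from N_{p+m}(0, Σ_{(i)}). Then the Kullback–Leibler divergence satisfies D(ℙ_{(1)} ‖ ℙ_{(2)}) = (n λ² / (2(1 − λ²))) · ‖U_{(1)}V_{(1)}' − U_{(2)}V_{(2)}'‖_F². -/

import Mathlib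

/-!
With `W = U Vᵀ`, both `W Wᵀ W = W` and `tr (Wᵀ W) = r` hold, so the covariance
`Σ(W) = [[1, λW], [λWᵀ, 1]]` has the explicit inverse
`[[1 + c λ² W Wᵀ, -c λ W], [-c λ Wᵀ, 1 + c λ² Wᵀ W]]` with `c = (1 - λ²)⁻¹`, and, by the Schur
complement, `det Σ(W) = (1 - λ²)^r`. Hence the log-determinant term vanishes, and
`tr (Σ(W₂)⁻¹ Σ(W₁)) = p + m + c λ² (2r - 2 tr (W₂ᵀ W₁)) = p + m + c λ² ‖W₁ - W₂‖_F²`.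
-/

open Matrix Real

/-- Frobenius norm. -/
noncomputable def frob {p m : ℕ} (A : Matrix (Fin p) (Fin m) ℝ) : ℝ :=
  Real.sqrt (∑ i, ∑ j, (A i j) ^ 2)

/-- The Kullback–Leibler divergence between the laws of `n` i.i.d. samples of
`N(0,Σ₁)` and `N(0,Σ₂)` in dimension `d`, via the closed-form Gaussian formula
`(n/2)[Tr(Σ₂⁻¹Σ₁) − d − log det(Σ₂⁻¹Σ₁)]`. -/
noncomputable def klGaussian {d : Type*} [Fintype d] [DecidableEq d]
    (S1 S2 : Matrix d d ℝ) (n : ℕ) : ℝ :=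
  (n : ℝ) / 2 * (Matrix.trace (S2⁻¹ * S1) - (Fintype.card d : ℝ)
    - Real.log (Matrix.det (S2⁻¹ * S1)))

theorem frob_sq_eq_trace {p m : ℕ} (A : Matrix (Fin p) (Fin m) ℝ) :
    frob A ^ 2 = trace (Aᵀ * A) := by
  rw [frob, Real.sq_sqrt (by positivity), Finset.sum_comm]
  simp only [trace, diag, mul_apply, transpose_apply, sq]

namespace Matrix

variable {K : Type*} [Field K] {p m r : Type*}

section

variable [DecidableEq p] [DecidableEq m]

def blockCov (lam : K) (W : Matrix p m K) : Matrix (p ⊕ m) (p ⊕ m) K :=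
  fromBlocks 1 (lam • W) (lam • Wᵀ) 1

theorem blockCov_mul_transpose [Fintype r] (lam : K) (U : Matrix p r K) (V : Matrix m r K) :
    blockCov lam (U * Vᵀ) = fromBlocks 1 (lam • (U * Vᵀ)) (lam • (V * Uᵀ)) 1 := by
  rw [blockCov, transpose_mul, transpose_transpose]

end

variable [Fintype p] [Fintype m]

theorem trace_fromBlocks (A : Matrix p p K) (B : Matrix p m K) (C : Matrix m p K)
    (D : Matrix m m K) : (fromBlocks A B C D).trace = A.trace + D.trace := by
  simp [trace, Fintype.sum_sum_type]

section

variable [Fintype r] [DecidableEq r] {U : Matrix p r K} {V : Matrix m r K}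

theorem mul_transpose_mul_transpose_mul_self (hU : Uᵀ * U = 1) (hV : Vᵀ * V = 1) :
    U * Vᵀ * (U * Vᵀ)ᵀ * (U * Vᵀ) = U * Vᵀ := by
  simp only [transpose_mul, transpose_transpose, Matrix.mul_assoc]
  rw [← Matrix.mul_assoc Vᵀ V, hV, Matrix.one_mul, ← Matrix.mul_assoc Uᵀ U, hU,
    Matrix.one_mul]

theorem trace_transpose_mul_self_mul_transpose (hU : Uᵀ * U = 1) (hV : Vᵀ * V = 1) :
    trace ((U * Vᵀ)ᵀ * (U * Vᵀ)) = Fintype.card r := by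
  rw [transpose_mul, transpose_transpose, Matrix.mul_assoc, ← Matrix.mul_assoc Uᵀ, hU,
    Matrix.one_mul, trace_mul_comm, hV, trace_one]

end

variable [DecidableEq p] [DecidableEq m]

theorem blockCov_inv {lam : K} (hlam : 1 - lam ^ 2 ≠ 0) {W : Matrix p m K}
    (hW : W * Wᵀ * W = W) :
    (blockCov lam W)⁻¹ =
      fromBlocks (1 + (lam ^ 2 / (1 - lam ^ 2)) • (W * Wᵀ)) (-(lam / (1 - lam ^ 2)) • W)
        (-(lam / (1 - lam ^ 2)) • Wᵀ) (1 + (lam ^ 2 / (1 - lam ^ 2)) • (Wᵀ * W)) := by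
  have hWt : Wᵀ * W * Wᵀ = Wᵀ := by
    simpa only [transpose_mul, transpose_transpose, Matrix.mul_assoc] using congrArg transpose hW
  refine inv_eq_right_inv ?_
  rw [blockCov, fromBlocks_multiply, ← fromBlocks_one, fromBlocks_inj]
  refine ⟨?_, ?_, ?_, ?_⟩ <;>
  · simp only [Matrix.one_mul, Matrix.mul_one, Matrix.mul_add, Matrix.smul_mul, Matrix.mul_smul,
      smul_smul, ← Matrix.mul_assoc, hW, hWt]
    match_scalars <;> grind

theorem trace_blockCov_inv_mul {lam : K} (hlam : 1 - lam ^ 2 ≠ 0) {W₁ W₂ : Matrix p m K}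
    (hW₂ : W₂ * W₂ᵀ * W₂ = W₂) (htr : trace (W₁ᵀ * W₁) = trace (W₂ᵀ * W₂)) :
    trace ((blockCov lam W₂)⁻¹ * blockCov lam W₁) =
      Fintype.card p + Fintype.card m
        + lam ^ 2 / (1 - lam ^ 2) * trace ((W₁ - W₂)ᵀ * (W₁ - W₂)) := by
  rw [blockCov_inv hlam hW₂, blockCov, fromBlocks_multiply, trace_fromBlocks]
  simp only [Matrix.mul_one, Matrix.smul_mul, Matrix.mul_smul, smul_smul,
    transpose_sub, Matrix.sub_mul, Matrix.mul_sub, trace_add, trace_sub,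
    trace_smul, trace_one, smul_eq_mul, htr]
  rw [trace_mul_comm W₂ W₂ᵀ, trace_mul_comm W₂ W₁ᵀ, ← trace_transpose (W₁ᵀ * W₂),
    transpose_mul, transpose_transpose]
  field_simp
  ring

theorem det_blockCov_mul_transpose [Fintype r] [DecidableEq r] (lam : K) {U : Matrix p r K}
    {V : Matrix m r K} (hU : Uᵀ * U = 1) (hV : Vᵀ * V = 1) :
    (blockCov lam (U * Vᵀ)).det = (1 - lam ^ 2) ^ Fintype.card r := by
  have hschur : 1 - lam • (U * Vᵀ)ᵀ * lam • (U * Vᵀ) = 1 + (-lam ^ 2 • V) * Vᵀ := by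
    rw [transpose_mul, transpose_transpose, Matrix.smul_mul, Matrix.mul_smul, smul_smul,
      Matrix.mul_assoc, ← Matrix.mul_assoc Uᵀ, hU, Matrix.one_mul, Matrix.smul_mul, neg_smul,
      sub_eq_add_neg, sq]
  rw [blockCov, det_fromBlocks_one₁₁, hschur, det_one_add_mul_comm, Matrix.mul_smul, hV,
    show (1 : Matrix r r K) + -lam ^ 2 • 1 = (1 - lam ^ 2) • 1 by module, det_smul, det_one,
    mul_one]

end Matrix

/-- For `Σ_{(i)}` the block covariance with identity diagonal blocks and
off-diagonal blocks `λ U_{(i)} V_{(i)}'`, with `λ ∈ (0,1)` and `U_{(i)}, V_{(i)}`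
having orthonormal columns, the KL divergence between the laws of `n` i.i.d.
samples from `N(0,Σ_{(1)})` and `N(0,Σ_{(2)})` equals
`(nλ²/(2(1−λ²))) ‖U₁V₁' − U₂V₂'‖_F²`. -/
theorem stmt6 {p m r : ℕ} (lam : ℝ) (hlam0 : 0 < lam) (hlam1 : lam < 1)
    (U1 U2 : Matrix (Fin p) (Fin r) ℝ) (V1 V2 : Matrix (Fin m) (Fin r) ℝ)
    (hU1 : U1ᵀ * U1 = 1) (hU2 : U2ᵀ * U2 = 1)
    (hV1 : V1ᵀ * V1 = 1) (hV2 : V2ᵀ * V2 = 1) (n : ℕ) :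
    klGaussian
        (Matrix.fromBlocks 1 (lam • (U1 * V1ᵀ)) (lam • (V1 * U1ᵀ)) 1)
        (Matrix.fromBlocks 1 (lam • (U2 * V2ᵀ)) (lam • (V2 * U2ᵀ)) 1) n
      = (n : ℝ) * lam ^ 2 / (2 * (1 - lam ^ 2)) * frob (U1 * V1ᵀ - U2 * V2ᵀ) ^ 2 := by
  have hlam : 1 - lam ^ 2 ≠ 0 := by nlinarith
  have htrace := trace_blockCov_inv_mul hlam (mul_transpose_mul_transpose_mul_self hU2 hV2)
    ((trace_transpose_mul_self_mul_transpose hU1 hV1).trans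
      (trace_transpose_mul_self_mul_transpose hU2 hV2).symm)
  have hdet : ((blockCov lam (U2 * V2ᵀ))⁻¹ * blockCov lam (U1 * V1ᵀ)).det = 1 := by
    have hdet₂ := det_blockCov_mul_transpose lam hU2 hV2
    rw [det_mul, det_blockCov_mul_transpose lam hU1 hV1, ← hdet₂,
      det_nonsing_inv_mul_det _ (hdet₂ ▸ (pow_ne_zero _ hlam).isUnit)]
  rw [← blockCov_mul_transpose, ← blockCov_mul_transpose, klGaussian, htrace, hdet, log_one,
    frob_sq_eq_trace, Fintype.card_sum, Nat.cast_add]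
  field_simp
  ring
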